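/- For each fixed integer m ≥ 1, a(n,m) ~ n^{m−1} / (2^{⌊m/2⌋} (m−1)!) as n → ∞; that is, the real sequence a(n,m) · 2^{⌊m/2⌋} · (m−1)! / n^{m−1} tends to 1 as n → ∞. -/

import Mathlib

/-- `l` is a composition of `n`: a finite list of positive integers summing to `n`
(the empty list is the unique composition of `0`). -/
def IsComposition (n : ℕ) (l : List ℕ) : Prop :=
  (∀ x ∈ l, 0 < x) ∧ l.sum = n

/-- The Arndt condition: `σ_{2i-1} > σ_{2i}` (1-based) for every `i` with `2i ≤ ℓ`;
with 0-based indices, `l[2i] > l[2i+1]` whenever `2i+1 < l.length`. -/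
def IsArndt (l : List ℕ) : Prop :=
  ∀ i : ℕ, 2 * i + 1 < l.length → l.getD (2 * i + 1) 0 < l.getD (2 * i) 0

/-- `arndt n` is the number of Arndt compositions of `n`. -/
noncomputable def arndt (n : ℕ) : ℕ :=
  Set.ncard {l : List ℕ | IsComposition n l ∧ IsArndt l}

/-- `arndtParts n m` is the number of Arndt compositions of `n` with exactly `m` parts. -/
noncomputable def arndtParts (n m : ℕ) : ℕ :=
  Set.ncard {l : List ℕ | IsComposition n l ∧ IsArndt l ∧ l.length = m}

/-- The generalized binomial coefficient `C(a,b) = a(a-1)⋯(a-b+1)/b!` for an integer `a`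
and a natural number `b` (represented as a nonnegative integer); it is `0` for negative `b`. -/
def genChoose (a b : ℤ) : ℤ :=
  if 0 ≤ b then (∏ i ∈ Finset.range b.toNat, (a - (i : ℤ))) / (b.toNat.factorial : ℤ) else 0

/-!
Reversing any subset of the `⌊m/2⌋` pairs `(σ_{2i-1}, σ_{2i})` of an Arndt composition gives a
composition, and the Arndt composition and the subset can be read off from it; hence
`2^⌊m/2⌋ a(n,m) ≤ C(n-1, m-1)`. Conversely, replacing each pair `(x, y)` of a composition of `n`
by `(max x y + 1, min x y)` and recording whether `x < y` embeds the compositions of `n` with `m`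
parts into `⌊m/2⌋`-bit strings times the Arndt compositions of `n + ⌊m/2⌋` with `m` parts; hence
`C(n-⌊m/2⌋-1, m-1) ≤ 2^⌊m/2⌋ a(n,m)`. Both binomial coefficients are `~ n^{m-1}/(m-1)!`.
-/

open Filter Asymptotics Topology

lemma isArndt_nil : IsArndt [] := fun _ h => absurd h (by simp)

lemma isArndt_singleton (x : ℕ) : IsArndt [x] := fun _ h => absurd h (by simp)

lemma isArndt_cons_cons {x y : ℕ} {l : List ℕ} :
    IsArndt (x :: y :: l) ↔ y < x ∧ IsArndt l := by
  refine ⟨fun h => ⟨h 0 (by simp), fun i hi => ?_⟩, fun ⟨hyx, h⟩ i hi => ?_⟩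
  · simpa [Nat.mul_succ] using h (i + 1) (by simp; omega)
  · cases i with
    | zero => simpa using hyx
    | succ i => simpa [Nat.mul_succ] using h i (by simp [Nat.mul_succ] at hi; omega)

lemma exists_eq_cons_cons {α : Type*} {l : List α} (h : 2 ≤ l.length) :
    ∃ x y t, l = x :: y :: t := by
  rcases l with _ | ⟨x, _ | ⟨y, t⟩⟩
  · simp at h
  · simp at h
  · exact ⟨x, y, t, rfl⟩

lemma length_lt_two_of_ne_cons_cons {α : Type*} {l : List α} (h : ∀ x y t, l ≠ x :: y :: t) :
    l.length < 2 := by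
  by_contra h'
  obtain ⟨x, y, t, rfl⟩ := exists_eq_cons_cons (not_lt.mp h')
  exact h x y t rfl

def compositions (n m : ℕ) : Set (List ℕ) := {l | IsComposition n l ∧ l.length = m}

def arndtCompositions (n m : ℕ) : Set (List ℕ) :=
  {l | IsComposition n l ∧ IsArndt l ∧ l.length = m}

instance (n m : ℕ) : Finite (compositions n m) :=
  Set.Finite.to_subtype <|
    (Set.finite_range (Composition.blocks : Composition n → List ℕ)).subset
      fun l ⟨⟨hpos, hsum⟩, _⟩ => ⟨⟨l, hpos _, hsum⟩, rfl⟩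

lemma arndtCompositions_subset (n m : ℕ) : arndtCompositions n m ⊆ compositions n m :=
  fun _ ⟨hc, _, hl⟩ => ⟨hc, hl⟩

lemma compositions_eq_empty {n m : ℕ} (h : n < m) : compositions n m = ∅ :=
  Set.eq_empty_of_forall_notMem fun l ⟨⟨hpos, hsum⟩, hl⟩ =>
    ((Composition.length_le ⟨l, hpos _, hsum⟩).trans_lt h).ne hl

lemma compositions_succ_one (n : ℕ) : compositions (n + 1) 1 = {[n + 1]} := by
  ext l
  constructor
  · rintro ⟨⟨-, hsum⟩, hl⟩
    obtain ⟨x, rfl⟩ := List.length_eq_one_iff.mp hl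
    simp_all
  · rintro rfl
    exact ⟨⟨by simp, by simp⟩, rfl⟩

lemma cons_mem_compositions {x n m : ℕ} {l : List ℕ} :
    x :: l ∈ compositions n (m + 1) ↔ 0 < x ∧ x ≤ n ∧ l ∈ compositions (n - x) m := by
  simp only [compositions, IsComposition, Set.mem_ofPred_eq, List.forall_mem_cons, List.sum_cons,
    List.length_cons, Nat.add_right_cancel_iff]
  constructor
  · rintro ⟨⟨⟨hx, hl⟩, hsum⟩, hlen⟩
    exact ⟨hx, by omega, ⟨hl, by omega⟩, hlen⟩
  · rintro ⟨hx, hxn, ⟨hl, hsum⟩, hlen⟩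
    exact ⟨⟨⟨hx, hl⟩, by omega⟩, hlen⟩

/-- Pascal's rule: split by whether the first part is `1`. -/
lemma compositions_succ_succ (n m : ℕ) :
    compositions (n + 1) (m + 2) =
      List.cons 1 '' compositions n (m + 1) ∪
        (fun l => l.modifyHead (· + 1)) '' compositions n (m + 2) := by
  ext l
  rcases l with _ | ⟨x, l⟩
  · simp [compositions]
  simp only [Set.mem_union, Set.mem_image, cons_mem_compositions]
  constructor
  · rintro ⟨hx, hxn, hl⟩
    rcases Nat.lt_or_ge 1 x with h1 | h1
    · refine .inr ⟨(x - 1) :: l, cons_mem_compositions.mpr ⟨by omega, by omega, ?_⟩, ?_⟩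
      · rwa [show n - (x - 1) = n + 1 - x by omega]
      · simp only [List.modifyHead_cons]; congr; omega
    · obtain rfl : x = 1 := by omega
      exact .inl ⟨l, hl, rfl⟩
  · rintro (⟨l', hl', h⟩ | ⟨_ | ⟨y, l'⟩, hl', h⟩)
    · obtain ⟨rfl, rfl⟩ := List.cons_eq_cons.mp h
      exact ⟨one_pos, by omega, hl'⟩
    · simp [compositions] at hl'
    · obtain ⟨rfl, rfl⟩ := List.cons_eq_cons.mp (by simpa using h)
      obtain ⟨hy, hyn, hl'⟩ := cons_mem_compositions.mp hl'
      exact ⟨by omega, by omega, by rwa [show n + 1 - (y + 1) = n - y by omega]⟩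

lemma ncard_compositions (n m : ℕ) : (compositions (n + 1) (m + 1)).ncard = n.choose m := by
  induction n generalizing m with
  | zero =>
    cases m with
    | zero => simp [compositions_succ_one]
    | succ m => simp [compositions_eq_empty (show 0 + 1 < m + 1 + 1 by omega)]
  | succ n ih =>
    cases m with
    | zero => simp [compositions_succ_one]
    | succ m =>
      rw [compositions_succ_succ, Set.ncard_union_eq,
        Set.ncard_image_of_injective _ List.cons_injective, Set.InjOn.ncard_image, ih, ih,
        Nat.choose_succ_succ]
      · rintro (_ | ⟨x, l⟩) - (_ | ⟨y, l'⟩) - h <;> simp_all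
      · rw [Set.disjoint_left]
        rintro _ ⟨l, -, rfl⟩ ⟨_ | ⟨y, l'⟩, hl', h⟩
        · simp at h
        · have := (cons_mem_compositions.mp hl').1
          simp at h
          omega

lemma ncard_length_eq_bool (k : ℕ) : {bs : List Bool | bs.length = k}.ncard = 2 ^ k := by
  rw [← Nat.card_coe_set_eq]
  exact (Nat.card_eq_fintype_card (α := List.Vector Bool k)).trans (by simp)

def swapPairs : List Bool → List ℕ → List ℕ
  | b :: bs, x :: y :: l => (bif b then [y, x] else [x, y]) ++ swapPairs bs l
  | _, l => l

lemma swapPairs_perm (bs : List Bool) (l : List ℕ) : (swapPairs bs l).Perm l := by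
  fun_induction swapPairs with
  | case1 b bs x y l ih =>
    cases b
    · exact (ih.cons y).cons x
    · exact ((ih.cons x).cons y).trans (List.Perm.swap x y l)
  | case2 => rfl

lemma swapPairs_mem_compositions {n m : ℕ} (bs : List Bool) {l : List ℕ}
    (hl : l ∈ compositions n m) : swapPairs bs l ∈ compositions n m := by
  have hp := swapPairs_perm bs l
  obtain ⟨⟨hpos, hsum⟩, hlen⟩ := hl
  exact ⟨⟨fun x hx => hpos x (hp.mem_iff.mp hx), hp.sum_eq.trans hsum⟩,
    hp.length_eq.trans hlen⟩

lemma eq_of_swapPairs_eq {bs bs' : List Bool} {l l' : List ℕ} (hbs : bs.length = bs'.length)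
    (hl : 2 * bs.length ≤ l.length) (ha : IsArndt l) (ha' : IsArndt l')
    (h : swapPairs bs l = swapPairs bs' l') : bs = bs' ∧ l = l' := by
  induction bs generalizing bs' l l' with
  | nil =>
    obtain rfl := List.length_eq_zero_iff.mp hbs.symm
    exact ⟨rfl, by simpa [swapPairs] using h⟩
  | cons b bs ih =>
    obtain ⟨b', bs', rfl⟩ := List.exists_cons_of_length_eq_add_one hbs.symm
    have hlen := congrArg List.length h
    rw [(swapPairs_perm _ _).length_eq, (swapPairs_perm _ _).length_eq] at hlen
    obtain ⟨x, y, l, rfl⟩ := exists_eq_cons_cons (l := l) (by simp at hl; omega)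
    obtain ⟨x', y', l', rfl⟩ := exists_eq_cons_cons (l := l') (by simp at hlen; omega)
    simp only [List.length_cons] at hbs hl
    rw [isArndt_cons_cons] at ha ha'
    cases b <;> cases b' <;> simp [swapPairs] at h <;> obtain ⟨rfl, rfl, h⟩ := h <;>
      first | omega | simpa using ih (by omega) (by omega) ha.2 ha'.2 h

lemma two_pow_mul_arndtParts_le (n m : ℕ) :
    2 ^ (m / 2) * arndtParts n m ≤ (compositions n m).ncard := by
  rw [← ncard_length_eq_bool, arndtParts, ← Set.ncard_prod]
  refine Set.ncard_le_ncard_of_injOn (fun p => swapPairs p.1 p.2) ?_ ?_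
  · rintro ⟨bs, l⟩ ⟨-, hl⟩
    exact swapPairs_mem_compositions bs (arndtCompositions_subset n m hl)
  · rintro ⟨bs, l⟩ ⟨(hbs : bs.length = m / 2), -, ha, (hl : l.length = m)⟩
      ⟨bs', l'⟩ ⟨(hbs' : bs'.length = m / 2), -, ha', -⟩ h
    simpa using eq_of_swapPairs_eq (l := l) (hbs.trans hbs'.symm) (by omega) ha ha' h

def pairBits : List ℕ → List Bool
  | x :: y :: l => decide (x < y) :: pairBits l
  | _ => []

def bumpPairs : List ℕ → List ℕ
  | x :: y :: l => (max x y + 1) :: min x y :: bumpPairs l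
  | l => l

lemma length_pairBits (l : List ℕ) : (pairBits l).length = l.length / 2 := by
  fun_induction pairBits with
  | case1 x y l ih => simp [ih]; omega
  | case2 l h => have := length_lt_two_of_ne_cons_cons h; simp; omega

lemma length_bumpPairs (l : List ℕ) : (bumpPairs l).length = l.length := by
  fun_induction bumpPairs <;> simp_all

lemma sum_bumpPairs (l : List ℕ) : (bumpPairs l).sum = l.sum + l.length / 2 := by
  fun_induction bumpPairs with
  | case1 x y l ih => simp [ih]; omega
  | case2 l h => have := length_lt_two_of_ne_cons_cons h; simp; omega

lemma pos_of_mem_bumpPairs {l : List ℕ} (hl : ∀ x ∈ l, 0 < x) :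
    ∀ x ∈ bumpPairs l, 0 < x := by
  fun_induction bumpPairs with
  | case1 x y l ih => simp_all
  | case2 l h => exact hl

lemma isArndt_bumpPairs (l : List ℕ) : IsArndt (bumpPairs l) := by
  fun_induction bumpPairs with
  | case1 x y l ih => exact isArndt_cons_cons.mpr ⟨by omega, ih⟩
  | case2 l h =>
    rcases l with _ | ⟨x, _ | ⟨y, l⟩⟩
    · exact isArndt_nil
    · exact isArndt_singleton x
    · exact absurd rfl (h x y l)

lemma bumpPairs_mem_arndtCompositions {n m : ℕ} {l : List ℕ} (hl : l ∈ compositions n m) :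
    bumpPairs l ∈ arndtCompositions (n + m / 2) m := by
  obtain ⟨⟨hpos, hsum⟩, rfl⟩ := hl
  exact ⟨⟨pos_of_mem_bumpPairs hpos, by rw [sum_bumpPairs, hsum]⟩, isArndt_bumpPairs l,
    length_bumpPairs l⟩

lemma injective_pairBits_bumpPairs : Function.Injective fun l => (pairBits l, bumpPairs l) := by
  intro l l' h
  simp only [Prod.mk.injEq] at h
  obtain ⟨hb, h⟩ := h
  fun_induction bumpPairs l generalizing l' with
  | case1 x y l ih =>
    obtain ⟨x', y', l', rfl⟩ := exists_eq_cons_cons (l := l')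
      (by have := congrArg List.length h; simp [length_bumpPairs] at this; omega)
    simp only [pairBits, bumpPairs, List.cons.injEq] at hb h ⊢
    refine ⟨?_, ?_, ih hb.2 h.2.2⟩ <;>
      by_cases x < y <;> by_cases x' < y' <;> simp_all <;> omega
  | case2 l hl =>
    rcases l' with _ | ⟨x', _ | ⟨y', l'⟩⟩
    · simpa [bumpPairs] using h
    · simpa [bumpPairs] using h
    · exact (hl _ _ _ h).elim

lemma ncard_compositions_le (n m : ℕ) :
    (compositions n m).ncard ≤ 2 ^ (m / 2) * arndtParts (n + m / 2) m := by
  rw [← ncard_length_eq_bool, arndtParts, ← Set.ncard_prod]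
  refine Set.ncard_le_ncard_of_injOn (fun l => (pairBits l, bumpPairs l)) ?_
    injective_pairBits_bumpPairs.injOn
    ((List.finite_length_eq _ _).prod ((Set.toFinite _).subset (arndtCompositions_subset _ m)))
  intro l hl
  exact ⟨(length_pairBits l).trans (by rw [hl.2]), bumpPairs_mem_arndtCompositions hl⟩

lemma two_pow_mul_arndtParts_le_choose {n m : ℕ} (hn : 1 ≤ n) (hm : 1 ≤ m) :
    2 ^ (m / 2) * arndtParts n m ≤ (n - 1).choose (m - 1) := by
  obtain ⟨n, rfl⟩ := Nat.exists_eq_add_of_le' hn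
  obtain ⟨m, rfl⟩ := Nat.exists_eq_add_of_le' hm
  simpa [ncard_compositions] using two_pow_mul_arndtParts_le (n + 1) (m + 1)

lemma choose_le_two_pow_mul_arndtParts {n m : ℕ} (hn : m / 2 < n) (hm : 1 ≤ m) :
    (n - (m / 2 + 1)).choose (m - 1) ≤ 2 ^ (m / 2) * arndtParts n m := by
  obtain ⟨k, rfl⟩ : ∃ k, n = k + 1 + m / 2 := ⟨n - (m / 2 + 1), by omega⟩
  rw [show k + 1 + m / 2 - (m / 2 + 1) = k by omega]
  obtain ⟨m, rfl⟩ := Nat.exists_eq_add_of_le' hm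
  simpa [ncard_compositions] using ncard_compositions_le (k + 1) (m + 1)

lemma isEquivalent_natCast_sub (c : ℕ) :
    (fun n : ℕ => ((n - c : ℕ) : ℝ)) ~[atTop] fun n => (n : ℝ) := by
  refine (IsEquivalent.refl.sub_isLittleO ((isLittleO_const_id_atTop (c : ℝ)).comp_tendsto
    tendsto_natCast_atTop_atTop)).congr_left ?_
  filter_upwards [eventually_ge_atTop c] with n hn
  simp [Nat.cast_sub hn]

lemma tendsto_choose_sub_mul_factorial_div_pow (c k : ℕ) :
    Tendsto (fun n : ℕ => ((n - c).choose k : ℝ) * k.factorial / (n : ℝ) ^ k)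
      atTop (𝓝 1) := by
  have h := ((isEquivalent_choose k).comp_tendsto (tendsto_sub_atTop_nat c)).trans
    (((isEquivalent_natCast_sub c).pow k).div
      (IsEquivalent.refl (u := fun _ => (k.factorial : ℝ))))
  rw [isEquivalent_iff_tendsto_one ?_] at h
  · exact h.congr fun n => by simp [div_div_eq_mul_div]
  · filter_upwards [eventually_gt_atTop 0] with n hn
    simp only [Pi.div_apply, Pi.pow_apply]
    positivity

/-- for fixed `m ≥ 1`, `a(n,m) ~ n^{m-1}/(2^{⌊m/2⌋}(m-1)!)` as `n → ∞`. -/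
theorem arndtParts_asymptotic (m : ℕ) (hm : 1 ≤ m) :
    Filter.Tendsto
      (fun n : ℕ =>
        (arndtParts n m : ℝ) * 2 ^ (m / 2) * (m - 1).factorial / (n : ℝ) ^ (m - 1))
      Filter.atTop (nhds 1) := by
  refine tendsto_of_tendsto_of_tendsto_of_le_of_le'
    (tendsto_choose_sub_mul_factorial_div_pow (m / 2 + 1) (m - 1))
    (tendsto_choose_sub_mul_factorial_div_pow 1 (m - 1)) ?_ ?_
  · filter_upwards [eventually_gt_atTop (m / 2)] with n hn
    have h := choose_le_two_pow_mul_arndtParts hn hm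
    rw [mul_comm] at h
    gcongr
    exact_mod_cast h
  · filter_upwards [eventually_ge_atTop 1] with n hn
    have h := two_pow_mul_arndtParts_le_choose hn hm
    rw [mul_comm] at h
    gcongr
    exact_mod_cast h
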